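/- Let g: ℝ → ℝ be nondecreasing and left-continuous, V a real Banach space, and f: [0,T] → V a Bochner μ_g-integrable function. Define F(t) = ∫_{[0,t)} f dμ_g ∈ V. Then there exists a μ_g-measurable set N ⊆ [0,T] with μ_g(N) = 0 such that for all t ∈ [0,T] \ N the g-derivative F'_g(t) exists in V and F'_g(t) = f(t). -/

import Mathlib

open MeasureTheory Filter Set

/-- The set of discontinuity points of `g` (where `g` jumps). -/
def DSet (g : ℝ → ℝ) : Set ℝ := {t | g t < Function.rightLim g t}

/-- `F` has `g`-derivative `L` at `t` (relative to the set `A`): the usual Stieltjes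
difference quotient limit at continuity points of `g`, and the jump quotient at
discontinuity points of `g`. -/
def HasDerivG {V : Type*} [NormedAddCommGroup V] [NormedSpace ℝ V]
    (g : ℝ → ℝ) (A : Set ℝ) (F : ℝ → V) (t : ℝ) (L : V) : Prop :=
  if g t < Function.rightLim g t then
    ∃ Fp : V, Filter.Tendsto F (nhdsWithin t (A ∩ Set.Ioi t)) (nhds Fp) ∧
      L = (Function.rightLim g t - g t)⁻¹ • (Fp - F t)
  else
    Filter.Tendsto (fun s => (g s - g t)⁻¹ • (F s - F t)) (nhdsWithin t (A \ {t})) (nhds L)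

/-!
The generalized inverse `ψ y = sup {x ∈ [0, T] | g x ≤ y}` of `g` satisfies
`x ≤ ψ y ↔ g x ≤ y` on `[0, T]`, hence pushes Lebesgue measure on `[g 0, g T)` forward to `μ`
on `[0, T)`. Therefore `F = H ∘ g` on `[0, T]`, where `H` is the primitive of `f ∘ ψ`, and the
problem becomes the Lebesgue differentiation theorem for `H`. At a jump of `g`, `ψ ≡ t` on
`[g t, g t⁺)`, so the jump quotient is exactly `f t`. At a continuity point `t`, `ψ (g t) = t`,
and the Stieltjes quotient is the difference quotient of `H` at `g t` along `g s → g t`,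
provided `g` takes the value `g t` only at `t`. The exceptional `t` are those with `g t` in a
Lebesgue-null set; at continuity points `g` inverts `ψ`, so `μ` does not charge them.
-/

open Topology Function

noncomputable def genInv (g : ℝ → ℝ) (T y : ℝ) : ℝ := sSup ({x | g x ≤ y} ∩ Icc 0 T)

section genInv

variable {g : ℝ → ℝ} {T x y : ℝ}

theorem genInv_nonneg : 0 ≤ genInv g T y :=
  Real.sSup_nonneg fun _ hx => hx.2.1

theorem le_genInv (hx : x ∈ Icc 0 T) (h : g x ≤ y) : x ≤ genInv g T y :=
  le_csSup ⟨T, fun _ hz => hz.2.2⟩ ⟨h, hx⟩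

theorem genInv_eq {t : ℝ} (ht : t ∈ Icc 0 T) (hty : g t ≤ y)
    (hlt : ∀ x ∈ Icc 0 T, t < x → y < g x) : genInv g T y = t :=
  le_antisymm (csSup_le ⟨t, hty, ht⟩ fun x hx => not_lt.1 fun h => (hlt x hx.2 h).not_ge hx.1)
    (le_genInv ht hty)

theorem genInv_monotone : Monotone (genInv g T) := by
  intro y₁ y₂ h
  rcases ({x | g x ≤ y₁} ∩ Icc 0 T).eq_empty_or_nonempty with he | hne
  · rw [genInv, he, Real.sSup_empty]
    exact genInv_nonneg
  · exact csSup_le_csSup ⟨T, fun _ hz => hz.2.2⟩ hne fun x hx => ⟨hx.1.trans h, hx.2⟩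

-- Left continuity of `g` makes the supremum itself a point of the sublevel set.
theorem apply_genInv_le (hg : Monotone g) (hlc : ∀ t, ContinuousWithinAt g (Iio t) t)
    (hT : 0 ≤ T) (hy : g 0 ≤ y) : g (genInv g T y) ≤ y := by
  refine le_of_tendsto (hlc _) (eventually_nhdsWithin_of_forall fun x hx => ?_)
  have hne : ({x | g x ≤ y} ∩ Icc 0 T).Nonempty := ⟨0, hy, le_rfl, hT⟩
  obtain ⟨s, hs, hxs⟩ := exists_lt_of_lt_csSup hne hx
  exact (hg hxs.le).trans hs.1

theorem le_genInv_iff (hg : Monotone g) (hlc : ∀ t, ContinuousWithinAt g (Iio t) t)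
    (hT : 0 ≤ T) (hy : y ∈ Ico (g 0) (g T)) (hx : 0 ≤ x) :
    x ≤ genInv g T y ↔ g x ≤ y := by
  refine ⟨fun h => (hg h).trans (apply_genInv_le hg hlc hT hy.1), fun h => ?_⟩
  refine le_genInv ⟨hx, ?_⟩ h
  by_contra! hTx
  exact (h.trans_lt hy.2).not_ge (hg hTx.le)

theorem genInv_lt_iff (hg : Monotone g) (hlc : ∀ t, ContinuousWithinAt g (Iio t) t)
    (hT : 0 ≤ T) (hy : y ∈ Ico (g 0) (g T)) : genInv g T y < x ↔ y < g x := by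
  rcases le_or_gt 0 x with hx0 | hx0
  · simpa only [not_le] using (le_genInv_iff hg hlc hT hy hx0).not
  · exact iff_of_false (hx0.trans_le genInv_nonneg).not_gt ((hg hx0.le).trans hy.1).not_gt

theorem mapsTo_genInv (hg : Monotone g) (hlc : ∀ t, ContinuousWithinAt g (Iio t) t)
    (hT : 0 ≤ T) : MapsTo (genInv g T) (Ico (g 0) (g T)) (Ico 0 T) :=
  fun _ hy => ⟨genInv_nonneg, (genInv_lt_iff hg hlc hT hy).2 hy.2⟩

theorem preimage_genInv_Ico_inter {a b : ℝ} (hg : Monotone g)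
    (hlc : ∀ t, ContinuousWithinAt g (Iio t) t) (hT : 0 ≤ T) (ha : 0 ≤ a) (hb : b ≤ T) :
    genInv g T ⁻¹' Ico a b ∩ Ico (g 0) (g T) = Ico (g a) (g b) := by
  ext y
  constructor
  · rintro ⟨⟨hay, hyb⟩, hy⟩
    exact ⟨(le_genInv_iff hg hlc hT hy ha).1 hay, (genInv_lt_iff hg hlc hT hy).1 hyb⟩
  · rintro ⟨hay, hyb⟩
    have hy : y ∈ Ico (g 0) (g T) := ⟨(hg ha).trans hay, hyb.trans_le (hg hb)⟩
    exact ⟨⟨(le_genInv_iff hg hlc hT hy ha).2 hay, (genInv_lt_iff hg hlc hT hy).2 hyb⟩, hy⟩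

theorem le_rightLim_genInv (hg : Monotone g) (hlc : ∀ t, ContinuousWithinAt g (Iio t) t)
    (hT : 0 ≤ T) (hy : y ∈ Ico (g 0) (g T)) : y ≤ rightLim g (genInv g T y) := by
  have hlt : genInv g T y < T := (mapsTo_genInv hg hlc hT hy).2
  refine ge_of_tendsto (hg.tendsto_rightLim _) ?_
  filter_upwards [Ioc_mem_nhdsGT hlt] with x hx
  exact ((genInv_lt_iff hg hlc hT hy).1 hx.1).le

end genInv

section pushforward

variable {g : ℝ → ℝ} {μ : Measure ℝ} {T : ℝ}

theorem measure_Ico_eq_ofReal (hg : Monotone g)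
    (hμ : ∀ a b : ℝ, a ≤ b → μ (Ico a b) = ENNReal.ofReal (g b - g a)) (a b : ℝ) :
    μ (Ico a b) = ENNReal.ofReal (g b - g a) := by
  rcases le_or_gt a b with hab | hba
  · exact hμ a b hab
  · rw [Ico_eq_empty hba.not_gt, measure_empty,
      ENNReal.ofReal_of_nonpos (sub_nonpos.2 (hg hba.le))]

theorem measure_singleton_eq_zero_of_notMem_DSet (hg : Monotone g)
    (hμ : ∀ a b : ℝ, a ≤ b → μ (Ico a b) = ENNReal.ofReal (g b - g a)) {t : ℝ}
    (ht : t ∉ DSet g) : μ {t} = 0 := by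
  have hrl : rightLim g t = g t := le_antisymm (not_lt.1 ht) (hg.le_rightLim le_rfl)
  have hlim : Tendsto (fun s => ENNReal.ofReal (g s - g t)) (𝓝[>] t) (𝓝 0) := by
    simpa [hrl] using ENNReal.tendsto_ofReal ((hg.tendsto_rightLim t).sub_const (g t))
  refine nonpos_iff_eq_zero.1 (ge_of_tendsto hlim ?_)
  filter_upwards [self_mem_nhdsWithin] with s hs
  rw [← hμ t s (le_of_lt hs)]
  exact measure_mono (singleton_subset_iff.2 ⟨le_rfl, hs⟩)

theorem restrict_Ico_eq_map_genInv (hg : Monotone g) (hlc : ∀ t, ContinuousWithinAt g (Iio t) t)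
    (hμ : ∀ a b : ℝ, a ≤ b → μ (Ico a b) = ENNReal.ofReal (g b - g a)) (hT : 0 ≤ T) :
    μ.restrict (Ico 0 T) = (volume.restrict (Ico (g 0) (g T))).map (genInv g T) := by
  have hm : Measurable (genInv g T) := genInv_monotone.measurable
  have : IsFiniteMeasure (μ.restrict (Ico 0 T)) :=
    ⟨by rw [Measure.restrict_apply_univ, hμ 0 T hT]; exact ENNReal.ofReal_lt_top⟩
  refine Measure.ext_of_Ico_finite _ _ ?_ fun a b _ => ?_
  · rw [Measure.restrict_apply_univ, Measure.map_apply hm MeasurableSet.univ, preimage_univ,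
      Measure.restrict_apply_univ, Real.volume_Ico, hμ 0 T hT]
  · have hpre : genInv g T ⁻¹' Ico a b ∩ Ico (g 0) (g T)
        = genInv g T ⁻¹' Ico (max a 0) (min b T) ∩ Ico (g 0) (g T) := by
      rw [← Ico_inter_Ico, preimage_inter, inter_assoc,
        inter_eq_right.2 (mapsTo_genInv hg hlc hT).subset_preimage]
    rw [Measure.restrict_apply measurableSet_Ico, Ico_inter_Ico,
      Measure.map_apply hm measurableSet_Ico, Measure.restrict_apply (hm measurableSet_Ico), hpre,
      preimage_genInv_Ico_inter hg hlc hT (le_max_right _ _) (min_le_right _ _), Real.volume_Ico,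
      measure_Ico_eq_ofReal hg hμ]

end pushforward

noncomputable def compGenInv {V : Type*} [Zero V] (g : ℝ → ℝ) (T : ℝ) (f : ℝ → V) :
    ℝ → V :=
  (Ico (g 0) (g T)).indicator (f ∘ genInv g T)

section compGenInv

variable {V : Type*} [NormedAddCommGroup V] {g : ℝ → ℝ} {μ : Measure ℝ}
  {T t y : ℝ} {f : ℝ → V}

theorem compGenInv_eq_of_forall_lt (hg : Monotone g) (ht : t ∈ Icc 0 T)
    (hy : y ∈ Ico (g t) (g T)) (hlt : ∀ x ∈ Icc 0 T, t < x → y < g x) :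
    compGenInv g T f y = f t := by
  have hyD : y ∈ Ico (g 0) (g T) := ⟨(hg ht.1).trans hy.1, hy.2⟩
  rw [compGenInv, indicator_of_mem hyD, Function.comp_apply, genInv_eq ht hy.1 hlt]

theorem compGenInv_apply_self (hg : Monotone g) (ht : t ∈ Ico 0 T)
    (hinj : ∀ s ∈ Icc 0 T, g s = g t → s = t) : compGenInv g T f (g t) = f t := by
  have hlt : ∀ x ∈ Icc 0 T, t < x → g t < g x := fun x hx htx =>
    (hg htx.le).lt_of_ne fun h => htx.ne' (hinj x hx h.symm)
  exact compGenInv_eq_of_forall_lt hg (Ico_subset_Icc_self ht)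
    ⟨le_rfl, hlt T ⟨ht.1.trans ht.2.le, le_rfl⟩ ht.2⟩ hlt

theorem integrable_compGenInv (hg : Monotone g) (hlc : ∀ t, ContinuousWithinAt g (Iio t) t)
    (hμ : ∀ a b : ℝ, a ≤ b → μ (Ico a b) = ENNReal.ofReal (g b - g a)) (hT : 0 ≤ T)
    (hf : IntegrableOn f (Ico 0 T) μ) : Integrable (compGenInv g T f) := by
  rw [IntegrableOn, restrict_Ico_eq_map_genInv hg hlc hμ hT,
    integrable_map_measure hf.aestronglyMeasurable genInv_monotone.measurable.aemeasurable] at hf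
  exact (integrable_indicator_iff measurableSet_Ico).2 hf

variable [NormedSpace ℝ V]

theorem setIntegral_Ico_eq_intervalIntegral_compGenInv (hg : Monotone g)
    (hlc : ∀ t, ContinuousWithinAt g (Iio t) t)
    (hμ : ∀ a b : ℝ, a ≤ b → μ (Ico a b) = ENNReal.ofReal (g b - g a)) (hT : 0 ≤ T)
    (hf : IntegrableOn f (Ico 0 T) μ) (ht : t ∈ Icc 0 T) :
    ∫ s in Ico 0 t, f s ∂μ = ∫ y in g 0..g t, compGenInv g T f y := by
  have hm : Measurable (genInv g T) := genInv_monotone.measurable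
  have hmap := restrict_Ico_eq_map_genInv hg hlc hμ hT
  have hfm : AEStronglyMeasurable f ((volume.restrict (Ico (g 0) (g T))).map (genInv g T)) :=
    hmap ▸ hf.aestronglyMeasurable
  calc ∫ s in Ico 0 t, f s ∂μ = ∫ s in Ico 0 t, f s ∂(μ.restrict (Ico 0 T)) := by
        rw [Measure.restrict_restrict measurableSet_Ico,
          inter_eq_self_of_subset_left (Ico_subset_Ico_right ht.2)]
    _ = ∫ y in Ico (g 0) (g t), f (genInv g T y) := by
        rw [hmap, setIntegral_map measurableSet_Ico hfm hm.aemeasurable,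
          Measure.restrict_restrict (hm measurableSet_Ico),
          preimage_genInv_Ico_inter hg hlc hT le_rfl ht.2]
    _ = ∫ y in g 0..g t, compGenInv g T f y := by
        rw [intervalIntegral.integral_of_le (hg ht.1), ← integral_Ico_eq_integral_Ioc]
        refine setIntegral_congr_fun measurableSet_Ico fun y hy => ?_
        rw [compGenInv, indicator_of_mem (Ico_subset_Ico_right (hg ht.2) hy), Function.comp_apply]

variable [CompleteSpace V]

theorem intervalIntegral_compGenInv_rightLim (hg : Monotone g) (ht : t ∈ Ico 0 T) :
    ∫ y in g t..rightLim g t, compGenInv g T f y = (rightLim g t - g t) • f t := by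
  have hle : g t ≤ rightLim g t := hg.le_rightLim le_rfl
  have hconst : EqOn (compGenInv g T f) (fun _ => f t) (Ioo (g t) (rightLim g t)) :=
    fun y hy => compGenInv_eq_of_forall_lt hg (Ico_subset_Icc_self ht)
      ⟨hy.1.le, hy.2.trans_le (hg.rightLim_le ht.2)⟩
      fun _ _ hx => hy.2.trans_le (hg.rightLim_le hx)
  rw [intervalIntegral.integral_of_le hle, integral_Ioc_eq_integral_Ioo,
    setIntegral_congr_fun measurableSet_Ioo hconst, ← integral_Ioc_eq_integral_Ioo,
    ← intervalIntegral.integral_of_le hle, intervalIntegral.integral_const]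

theorem tendsto_primitive_compGenInv_nhdsGT (hg : Monotone g) (hint : Integrable (compGenInv g T f))
    (ht : t ∈ Ico 0 T) :
    Tendsto (fun s => ∫ y in g 0..g s, compGenInv g T f y) (𝓝[>] t)
      (𝓝 ((∫ y in g 0..g t, compGenInv g T f y) + (rightLim g t - g t) • f t)) := by
  rw [← intervalIntegral_compGenInv_rightLim hg ht,
    intervalIntegral.integral_add_adjacent_intervals hint.intervalIntegrable
      hint.intervalIntegrable]
  have hH := intervalIntegral.continuous_primitive (fun _ _ => hint.intervalIntegrable) (g 0)
  exact (hH.tendsto _).comp (hg.tendsto_rightLim t)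

end compGenInv

section nullSet

variable {g : ℝ → ℝ} {μ : Measure ℝ} {T : ℝ} {E : Set ℝ}

theorem measurableSet_Icc_inter_compl_DSet_inter_preimage (hg : Monotone g) (hE : MeasurableSet E) :
    MeasurableSet (Icc 0 T ∩ (DSet g)ᶜ ∩ g ⁻¹' E) :=
  (measurableSet_Icc.inter (measurableSet_lt hg.measurable hg.rightLim.measurable).compl).inter
    (hg.measurable hE)

theorem measure_Icc_inter_compl_DSet_inter_preimage_eq_zero (hg : Monotone g)
    (hlc : ∀ t, ContinuousWithinAt g (Iio t) t)
    (hμ : ∀ a b : ℝ, a ≤ b → μ (Ico a b) = ENNReal.ofReal (g b - g a)) (hT : 0 ≤ T)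
    (hEm : MeasurableSet E) (hE : volume E = 0) :
    μ (Icc 0 T ∩ (DSet g)ᶜ ∩ g ⁻¹' E) = 0 := by
  set N := Icc 0 T ∩ (DSet g)ᶜ ∩ g ⁻¹' E
  have hNm : MeasurableSet N := measurableSet_Icc_inter_compl_DSet_inter_preimage hg hEm
  have hm : Measurable (genInv g T) := genInv_monotone.measurable
  have hIco : μ (N ∩ Ico 0 T) = 0 := by
    rw [← Measure.restrict_apply hNm, restrict_Ico_eq_map_genInv hg hlc hμ hT,
      Measure.map_apply hm hNm, Measure.restrict_apply (hm hNm)]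
    refine measure_mono_null (fun y ⟨hyN, hy⟩ => ?_) hE
    have hcont : rightLim g (genInv g T y) ≤ g (genInv g T y) := not_lt.1 hyN.1.2
    have hyg : y = g (genInv g T y) :=
      le_antisymm ((le_rightLim_genInv hg hlc hT hy).trans hcont) (apply_genInv_le hg hlc hT hy.1)
    exact hyg ▸ hyN.2
  have hTN : μ (N ∩ {T}) = 0 := by
    rcases (N ∩ {T}).eq_empty_or_nonempty with h | ⟨t, htN, rfl⟩
    · rw [h, measure_empty]
    · exact measure_mono_null inter_subset_right
        (measure_singleton_eq_zero_of_notMem_DSet hg hμ htN.1.2)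
  refine measure_mono_null (fun t ht => ?_) (measure_union_null hIco hTN)
  exact (ht.1.1.2.lt_or_eq).imp (fun h => ⟨ht, ht.1.1.1, h⟩) fun h => ⟨ht, h⟩

end nullSet

theorem Monotone.eq_of_apply_eq_of_notMem_range_rat {g : ℝ → ℝ} (hg : Monotone g) {s t : ℝ}
    (ht : g t ∉ range fun q : ℚ => g q) (hst : g s = g t) : s = t := by
  by_contra hne
  obtain ⟨q, hq⟩ : ∃ q : ℚ, g q = g t := by
    rcases lt_or_gt_of_ne hne with h | h
    · obtain ⟨q, hsq, hqt⟩ := exists_rat_btwn h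
      exact ⟨q, le_antisymm (hg hqt.le) (hst ▸ hg hsq.le)⟩
    · obtain ⟨q, htq, hqs⟩ := exists_rat_btwn h
      exact ⟨q, le_antisymm (hst ▸ hg hqs.le) (hg htq.le)⟩
  exact ht ⟨q, hq⟩

theorem continuousAt_of_notMem_DSet {g : ℝ → ℝ} (hg : Monotone g)
    (hlc : ∀ t, ContinuousWithinAt g (Iio t) t) {t : ℝ} (ht : t ∉ DSet g) :
    ContinuousAt g t :=
  continuousAt_iff_continuous_left'_right'.2 ⟨hlc t, hg.continuousWithinAt_Ioi_iff_rightLim_eq.2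
    (le_antisymm (not_lt.1 ht) (hg.le_rightLim le_rfl))⟩

section HasDerivG

variable {V : Type*} [NormedAddCommGroup V] [NormedSpace ℝ V] {g : ℝ → ℝ} {A : Set ℝ}
  {F : ℝ → V} {t : ℝ} {L : V}

theorem hasDerivG_of_mem_DSet (ht : t ∈ DSet g)
    (hF : Tendsto F (𝓝[A ∩ Ioi t] t) (𝓝 (F t + (rightLim g t - g t) • L))) :
    HasDerivG g A F t L := by
  rw [HasDerivG, if_pos (show g t < rightLim g t from ht)]
  refine ⟨_, hF, ?_⟩
  rw [add_sub_cancel_left, smul_smul, inv_mul_cancel₀ (sub_pos.2 ht).ne', one_smul]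

theorem hasDerivG_of_notMem_DSet_of_hasDerivAt {H : ℝ → V} (hg : Monotone g)
    (hlc : ∀ t, ContinuousWithinAt g (Iio t) t) (hFH : ∀ s ∈ A, F s = H (g s)) (htA : t ∈ A)
    (ht : t ∉ DSet g) (hinj : ∀ s ∈ A, g s = g t → s = t) (hH : HasDerivAt H L (g t)) :
    HasDerivG g A F t L := by
  rw [HasDerivG, if_neg (show ¬g t < rightLim g t from ht)]
  have hg_ne : Tendsto g (𝓝[A \ {t}] t) (𝓝[≠] g t) :=
    tendsto_nhdsWithin_iff.2 ⟨(continuousAt_of_notMem_DSet hg hlc ht).tendsto.mono_left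
      nhdsWithin_le_nhds, eventually_nhdsWithin_of_forall fun s hs => mt (hinj s hs.1) hs.2⟩
  refine ((hasDerivAt_iff_tendsto_slope.1 hH).comp hg_ne).congr' ?_
  filter_upwards [self_mem_nhdsWithin] with s hs
  rw [Function.comp_apply, slope_def_module, hFH s hs.1, hFH t htA]

end HasDerivG

section primitive

variable {V : Type*} [NormedAddCommGroup V] [NormedSpace ℝ V] {g : ℝ → ℝ}
  {T t : ℝ} {f F : ℝ → V}

theorem hasDerivG_primitive_compGenInv_of_mem_DSet [CompleteSpace V] (hg : Monotone g)
    (hint : Integrable (compGenInv g T f))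
    (hFH : ∀ s ∈ Icc 0 T, F s = ∫ y in g 0..g s, compGenInv g T f y) (htA : t ∈ Icc 0 T)
    (ht : t ∈ DSet g) : HasDerivG g (Icc 0 T) F t (f t) := by
  refine hasDerivG_of_mem_DSet ht ?_
  rcases htA.2.lt_or_eq with htT | htT
  · rw [hFH t htA]
    refine ((tendsto_primitive_compGenInv_nhdsGT hg hint ⟨htA.1, htT⟩).mono_left
      (nhdsWithin_mono _ inter_subset_right)).congr' ?_
    filter_upwards [self_mem_nhdsWithin] with s hs using (hFH s hs.1).symm
  · have hempty : Icc 0 T ∩ Ioi t = ∅ :=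
      eq_empty_of_forall_notMem fun s hs => hs.1.2.not_gt (htT ▸ hs.2)
    rw [hempty, nhdsWithin_empty]
    exact tendsto_bot

theorem hasDerivG_primitive_compGenInv_of_notMem_DSet (hg : Monotone g)
    (hlc : ∀ t, ContinuousWithinAt g (Iio t) t)
    (hFH : ∀ s ∈ Icc 0 T, F s = ∫ y in g 0..g s, compGenInv g T f y) (htA : t ∈ Icc 0 T)
    (ht : t ∉ DSet g) (hrat : g t ∉ range fun q : ℚ => g q) (hgT : g t ≠ g T)
    (hH : HasDerivAt (fun x => ∫ y in g 0..x, compGenInv g T f y) (compGenInv g T f (g t))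
      (g t)) :
    HasDerivG g (Icc 0 T) F t (f t) := by
  have hinj : ∀ s, g s = g t → s = t := fun s => hg.eq_of_apply_eq_of_notMem_range_rat hrat
  have htT : t < T := htA.2.lt_of_ne fun h => hgT (h ▸ rfl)
  rw [compGenInv_apply_self hg ⟨htA.1, htT⟩ fun s _ => hinj s] at hH
  exact hasDerivG_of_notMem_DSet_of_hasDerivAt hg hlc hFH htA ht (fun s _ => hinj s) hH

end primitive

/-- Generalized Lebesgue differentiation theorem for Bochner `μ_g`-integrable
functions with values in a Banach space. -/
theorem stmt2
    {V : Type*} [NormedAddCommGroup V] [NormedSpace ℝ V] [CompleteSpace V]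
    (g : ℝ → ℝ) (hg : Monotone g)
    (hlc : ∀ t : ℝ, ContinuousWithinAt g (Set.Iio t) t)
    (μ : Measure ℝ)
    (hμ : ∀ a b : ℝ, a ≤ b → μ (Set.Ico a b) = ENNReal.ofReal (g b - g a))
    (T : ℝ) (hT : 0 ≤ T)
    (f : ℝ → V) (hf : IntegrableOn f (Set.Icc 0 T) μ)
    (F : ℝ → V) (hF : ∀ t ∈ Set.Icc 0 T, F t = ∫ s in Set.Ico 0 t, f s ∂μ) :
    ∃ N ⊆ Set.Icc 0 T, MeasurableSet N ∧ μ N = 0 ∧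
      ∀ t ∈ Set.Icc 0 T \ N, HasDerivG g (Set.Icc 0 T) F t (f t) := by
  have hfT : IntegrableOn f (Ico 0 T) μ := hf.mono_set Ico_subset_Icc_self
  have hint := integrable_compGenInv hg hlc hμ hT hfT
  have hFH : ∀ s ∈ Icc 0 T, F s = ∫ y in g 0..g s, compGenInv g T f y := fun s hs =>
    (hF s hs).trans (setIntegral_Ico_eq_intervalIntegral_compGenInv hg hlc hμ hT hfT hs)
  have hbad : volume {y | ¬HasDerivAt (fun x => ∫ z in g 0..x, compGenInv g T f z)
      (compGenInv g T f y) y} = 0 :=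
    ae_iff.1 ((LocallyIntegrable.ae_hasDerivAt_integral hint.locallyIntegrable).mono
      fun y hy => hy (g 0))
  -- The values `g q` catch the intervals where `g` is constant; `g T` catches the endpoint `T`.
  obtain ⟨E, hsub, hEm, hE0⟩ := exists_measurable_superset_of_null
    (measure_union_null
      (measure_union_null hbad ((countable_range fun q : ℚ => g q).measure_zero _))
      (measure_singleton (g T)))
  refine ⟨Icc 0 T ∩ (DSet g)ᶜ ∩ g ⁻¹' E, fun t ht => ht.1.1,
    measurableSet_Icc_inter_compl_DSet_inter_preimage hg hEm,
    measure_Icc_inter_compl_DSet_inter_preimage_eq_zero hg hlc hμ hT hEm hE0, ?_⟩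
  rintro t ⟨htA, htN⟩
  by_cases hjump : t ∈ DSet g
  · exact hasDerivG_primitive_compGenInv_of_mem_DSet hg hint hFH htA hjump
  · have hE : g t ∉ E := fun h => htN ⟨⟨htA, hjump⟩, h⟩
    refine hasDerivG_primitive_compGenInv_of_notMem_DSet hg hlc hFH htA hjump
      (fun h => hE (hsub (Or.inl (Or.inr h)))) (fun h => hE (hsub (Or.inr h))) ?_
    by_contra h
    exact hE (hsub (Or.inl (Or.inl h)))
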